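/- For all positive integers n and k with n >= k, sum_{i=k}^{n} s(n, i) * S(i, k) / i = (-1)^{n-k} * ((n-1)!/k!) * sum_{l=0}^{n-k} ((-1)^l / l!) * B_l^*. -/

import Mathlib

/-!
Let `Q_m(y) = ∫₀^y (x - 1)(x - 2)⋯(x - m) dx` (`descPochhammerPrimitive m y`). Expanding the
falling factorial `(x)_n = x(x - 1)⋯(x - n + 1) = ∑ s(n, i) xⁱ` gives
`Q_{n-1}(y) = ∑ s(n, i) yⁱ / i`, and `k! S(i, k)` is the `k`-th forward difference of `x ↦ xⁱ`
at `0`. Hence `k!` times the left-hand side is `Δᵏ Q_{n-1}(0)`. Since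
`Δ Q_m = Q_m(1) + m Q_{m-1}`, the constant dies after one more difference and
`Δᵏ Q_{n-1}(0) = (n-1)!/(n-k)! · Q_{n-k}(1)`. On the other side, `∑_{l ≤ M} (-1)ˡ/l! (x)_l`
telescopes to `(-1)ᴹ/M! (x - 1)_M`, so `∑_{l ≤ M} (-1)ˡ/l! B*_l = (-1)ᴹ/M! Q_M(1)`.
-/

open Finset

/-- Stirling numbers of the second kind. -/
def stirling2 : ℕ → ℕ → ℕ
  | 0, 0 => 1
  | 0, _ + 1 => 0
  | _ + 1, 0 => 0
  | n + 1, k + 1 => stirling2 n k + (k + 1) * stirling2 n (k + 1)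

/-- Signed Stirling numbers of the first kind. -/
def stirling1 : ℕ → ℕ → ℤ
  | 0, 0 => 1
  | 0, _ + 1 => 0
  | n + 1, 0 => -(n : ℤ) * stirling1 n 0
  | n + 1, k + 1 => stirling1 n k - (n : ℤ) * stirling1 n (k + 1)

/-- Bernoulli numbers of the second kind: `∫₀¹ x(x-1)⋯(x-n+1) dx`. -/
noncomputable def bernoulliStar (n : ℕ) : ℝ :=
  ∫ x in (0:ℝ)..1, (descPochhammer ℝ n).eval x

open fwdDiff Polynomial
open scoped Nat

lemma stirling1_succ_zero (n : ℕ) : stirling1 (n + 1) 0 = 0 := by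
  induction n with
  | zero => rfl
  | succ n ih => rw [stirling1, ih, mul_zero]

lemma stirling1_eq_zero_of_lt : ∀ {n i : ℕ}, n < i → stirling1 n i = 0
  | 0, _ + 1, _ => rfl
  | n + 1, i + 1, h => by
    rw [stirling1, stirling1_eq_zero_of_lt (by omega), stirling1_eq_zero_of_lt (by omega)]
    ring

lemma stirling2_eq_zero_of_lt : ∀ {i k : ℕ}, i < k → stirling2 i k = 0
  | 0, _ + 1, _ => rfl
  | i + 1, k + 1, h => by
    rw [stirling2, stirling2_eq_zero_of_lt (by omega), stirling2_eq_zero_of_lt (by omega)]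
    ring

section Pochhammer

variable {R : Type*} [CommRing R]

theorem descPochhammer_eval_sub_one (m : ℕ) (x : R) :
    (descPochhammer R m).eval (x - 1) =
      ∑ i ∈ range (m + 1), (stirling1 (m + 1) (i + 1) : R) * x ^ i := by
  induction m with
  | zero => simp [stirling1]
  | succ m ih =>
    have hs (i : ℕ) : (stirling1 (m + 2) (i + 1) : R) =
        stirling1 (m + 1) i - (m + 1) * stirling1 (m + 1) (i + 1) := by
      simp [stirling1]
    simp only [hs, sub_mul, sum_sub_distrib, mul_assoc, ← mul_sum]
    rw [sum_range_succ' (fun i => (stirling1 (m + 1) i : R) * x ^ i),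
      sum_range_succ (fun i => (stirling1 (m + 1) (i + 1) : R) * x ^ i),
      stirling1_succ_zero, stirling1_eq_zero_of_lt (by omega), descPochhammer_succ_eval, ih]
    simp only [Int.cast_zero, zero_mul, add_zero, mul_sum, sum_mul, ← sum_sub_distrib]
    exact sum_congr rfl fun i _ => by ring

theorem descPochhammer_eval_sub_eval_sub_one (m : ℕ) (x : R) :
    (descPochhammer R (m + 1)).eval x - (descPochhammer R (m + 1)).eval (x - 1) =
      (m + 1) * (descPochhammer R m).eval (x - 1) := by
  have := congrArg (eval x) (descPochhammer_succ_comp_X_sub_one R m)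
  simp only [eval_comp, eval_sub, eval_X, eval_one, smul_eq_mul, eval_mul, eval_add,
    eval_natCast] at this
  linear_combination -this

end Pochhammer

theorem sum_range_alternating_div_factorial_mul_descPochhammer_eval {K : Type*} [Field K]
    [CharZero K] (m : ℕ) (x : K) :
    ∑ l ∈ range (m + 1), (-1) ^ l / (l ! : K) * (descPochhammer K l).eval x =
      (-1) ^ m / (m ! : K) * (descPochhammer K m).eval (x - 1) := by
  induction m with
  | zero => simp
  | succ m ih =>
    rw [sum_range_succ, ih, sub_eq_iff_eq_add.mp (descPochhammer_eval_sub_eval_sub_one m x),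
      Nat.factorial_succ]
    push_cast
    field_simp
    ring

section ForwardDifference

variable {M R : Type*} [AddCommMonoid M] [CommRing R]

lemma fwdDiff_iter_sum_mul_apply {ι : Type*} (h : M) (s : Finset ι) (c : ι → R)
    (f : ι → M → R) (k : ℕ) (y : M) :
    Δ_[h] ^[k] (fun x => ∑ i ∈ s, c i * f i x) y = ∑ i ∈ s, c i * Δ_[h] ^[k] (f i) y := by
  have : (fun x => ∑ i ∈ s, c i * f i x) = ∑ i ∈ s, c i • f i := by
    ext x; simp
  rw [this, fwdDiff_iter_finsetSum, Finset.sum_apply]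
  simp [fwdDiff_iter_const_smul]

lemma fwdDiff_iter_succ_const_add_mul (h : M) (a c : R) (g : M → R) (k : ℕ) (y : M) :
    Δ_[h] ^[k + 1] (fun x => a + c * g x) y = c * Δ_[h] ^[k + 1] g y := by
  have : Δ_[h] (fun x => a + c * g x) = c • Δ_[h] g := by
    ext x; simp only [fwdDiff, Pi.smul_apply, smul_eq_mul]; ring
  rw [Function.iterate_succ_apply, this, fwdDiff_iter_const_smul, Function.iterate_succ_apply]
  rfl

lemma fwdDiff_iter_succ_id_mul (g : R → R) (k : ℕ) (y : R) :
    Δ_[1] ^[k + 1] (fun x => x * g x) y =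
      y * Δ_[1] ^[k + 1] g y + (k + 1) * Δ_[1] ^[k] g (y + 1) := by
  induction k generalizing y with
  | zero =>
    simp only [zero_add, Function.iterate_one, Function.iterate_zero_apply, fwdDiff]
    push_cast
    ring
  | succ k ih =>
    rw [Function.iterate_succ_apply', funext ih]
    simp only [fwdDiff, Function.iterate_succ_apply']
    push_cast
    ring

theorem factorial_mul_stirling2_eq_fwdDiff_iter (i k : ℕ) :
    (k ! * stirling2 i k : R) = Δ_[1] ^[k] (fun x : R => x ^ i) 0 := by
  induction i generalizing k with
  | zero =>
    cases k with
    | zero => simp [stirling2]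
    | succ k => rw [fwdDiff_iter_pow_eq_zero_of_lt k.succ_pos]; simp [stirling2]
  | succ i ih =>
    cases k with
    | zero => simp [stirling2]
    | succ k =>
      -- `Δᵏ⁺¹(x · xⁱ)(0) = (k + 1) Δᵏ(xⁱ)(1)`, and splitting `Δᵏ(xⁱ)(1)` at `0` gives the
      -- recurrence of `S`.
      simp only [_root_.pow_succ', fwdDiff_iter_succ_id_mul, zero_mul, zero_add]
      rw [← sub_add_cancel (Δ_[1] ^[k] (fun x : R => x ^ i) 1)
        (Δ_[1] ^[k] (fun x : R => x ^ i) 0)]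
      have hΔ : Δ_[1] ^[k] (fun x : R => x ^ i) 1 - Δ_[1] ^[k] (fun x : R => x ^ i) 0 =
          Δ_[1] ^[k + 1] (fun x : R => x ^ i) 0 := by
        rw [Function.iterate_succ_apply', fwdDiff, zero_add]
      rw [hΔ, ← ih, ← ih, stirling2, Nat.factorial_succ]
      push_cast
      ring

end ForwardDifference

lemma fwdDiff_intervalIntegral {E : Type*} [NormedAddCommGroup E] [NormedSpace ℝ E]
    {f : ℝ → E} (hf : Continuous f) (y : ℝ) :
    Δ_[1] (fun y => ∫ x in (0 : ℝ)..y, f x) y =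
      (∫ x in (0 : ℝ)..1, f x) + ∫ x in (0 : ℝ)..y, Δ_[1] f x := by
  have hshift : ∫ x in (1 : ℝ)..y + 1, f x = ∫ x in (0 : ℝ)..y, f (x + 1) := by simp
  simp only [fwdDiff]
  rw [← intervalIntegral.integral_add_adjacent_intervals (b := 1)
      (hf.intervalIntegrable _ _) (hf.intervalIntegrable _ _), hshift,
    intervalIntegral.integral_sub ((hf.comp' (continuous_add_const 1)).intervalIntegrable _ _)
      (hf.intervalIntegrable _ _)]
  abel

noncomputable def descPochhammerPrimitive (m : ℕ) (y : ℝ) : ℝ :=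
  ∫ x in (0 : ℝ)..y, (descPochhammer ℝ m).eval (x - 1)

lemma descPochhammerPrimitive_eq_sum (m : ℕ) (y : ℝ) :
    descPochhammerPrimitive m y =
      ∑ i ∈ Icc 1 (m + 1), (stirling1 (m + 1) i : ℝ) * y ^ i / i := by
  simp only [descPochhammerPrimitive, descPochhammer_eval_sub_one]
  rw [intervalIntegral.integral_finsetSum fun i _ =>
      Continuous.intervalIntegrable (by fun_prop) _ _,
    ← Ico_add_one_right_eq_Icc, sum_Ico_eq_sum_range]
  refine sum_congr (by simp) fun i _ => ?_
  rw [intervalIntegral.integral_const_mul, integral_pow, add_comm 1 i]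
  push_cast
  ring

lemma fwdDiff_descPochhammerPrimitive (m : ℕ) :
    Δ_[1] (descPochhammerPrimitive (m + 1)) =
      fun y => descPochhammerPrimitive (m + 1) 1 + (m + 1) * descPochhammerPrimitive m y := by
  ext y
  have hΔ : Δ_[1] (fun x : ℝ => (descPochhammer ℝ (m + 1)).eval (x - 1)) =
      fun x => (m + 1) * (descPochhammer ℝ m).eval (x - 1) := by
    ext x
    simpa [fwdDiff] using descPochhammer_eval_sub_eval_sub_one m x
  have := fwdDiff_intervalIntegral
    (f := fun x : ℝ => (descPochhammer ℝ (m + 1)).eval (x - 1)) (by fun_prop) y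
  rw [hΔ, intervalIntegral.integral_const_mul] at this
  exact this

lemma fwdDiff_iter_succ_descPochhammerPrimitive_zero {k m : ℕ} (hkm : k ≤ m) :
    Δ_[1] ^[k + 1] (descPochhammerPrimitive m) 0 =
      m ! / (m - k)! * descPochhammerPrimitive (m - k) 1 := by
  induction k generalizing m with
  | zero =>
    have : (m ! : ℝ) ≠ 0 := by positivity
    rw [zero_add, Function.iterate_one, fwdDiff, zero_add, Nat.sub_zero, div_self this, one_mul]
    simp [descPochhammerPrimitive]
  | succ k ih =>
    obtain ⟨m, rfl⟩ : ∃ m', m = m' + 1 := ⟨m - 1, by omega⟩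
    rw [Function.iterate_succ_apply, fwdDiff_descPochhammerPrimitive,
      fwdDiff_iter_succ_const_add_mul, ih (by omega), Nat.factorial_succ]
    simp only [Nat.add_sub_add_right]
    push_cast
    ring

lemma sum_alternating_div_factorial_mul_bernoulliStar (m : ℕ) :
    ∑ l ∈ range (m + 1), (-1) ^ l / (l ! : ℝ) * bernoulliStar l =
      (-1) ^ m / (m ! : ℝ) * descPochhammerPrimitive m 1 := by
  simp only [bernoulliStar, descPochhammerPrimitive, ← intervalIntegral.integral_const_mul]
  rw [← intervalIntegral.integral_finsetSum fun l _ =>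
    Continuous.intervalIntegrable (by fun_prop) _ _]
  simp only [sum_range_alternating_div_factorial_mul_descPochhammer_eval]

lemma factorial_mul_sum_stirling1_mul_stirling2_div {j m : ℕ} (hjm : j ≤ m) :
    ((j + 1)! : ℝ) *
        ∑ i ∈ Icc (j + 1) (m + 1), (stirling1 (m + 1) i : ℝ) * stirling2 i (j + 1) / i =
      m ! / (m - j)! * descPochhammerPrimitive (m - j) 1 := by
  have hIcc : ∑ i ∈ Icc (j + 1) (m + 1), (stirling1 (m + 1) i : ℝ) * stirling2 i (j + 1) / i =
      ∑ i ∈ Icc 1 (m + 1), (stirling1 (m + 1) i : ℝ) * stirling2 i (j + 1) / i := by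
    refine sum_subset (Icc_subset_Icc (by omega) le_rfl) fun i hi hij => ?_
    rw [stirling2_eq_zero_of_lt (by simp only [mem_Icc] at hi hij; omega)]
    simp
  calc ((j + 1)! : ℝ) *
        ∑ i ∈ Icc (j + 1) (m + 1), (stirling1 (m + 1) i : ℝ) * stirling2 i (j + 1) / i
      = ∑ i ∈ Icc 1 (m + 1),
          (stirling1 (m + 1) i : ℝ) / i * Δ_[1] ^[j + 1] (fun x : ℝ => x ^ i) 0 := by
        rw [hIcc, mul_sum]
        refine sum_congr rfl fun i _ => ?_
        rw [← factorial_mul_stirling2_eq_fwdDiff_iter]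
        ring
    _ = Δ_[1] ^[j + 1] (descPochhammerPrimitive m) 0 := by
        have hQ : descPochhammerPrimitive m =
            fun y => ∑ i ∈ Icc 1 (m + 1), (stirling1 (m + 1) i : ℝ) / i * y ^ i := by
          ext y
          simp only [descPochhammerPrimitive_eq_sum, mul_div_right_comm]
        rw [hQ, fwdDiff_iter_sum_mul_apply]
    _ = m ! / (m - j)! * descPochhammerPrimitive (m - j) 1 :=
        fwdDiff_iter_succ_descPochhammerPrimitive_zero hjm

theorem stmt9_general (n k : ℕ) (hk : 0 < k) (hkn : k ≤ n) :
    ∑ i ∈ Finset.Icc k n, (stirling1 n i : ℝ) * (stirling2 i k : ℝ) / i =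
      (-1 : ℝ) ^ (n - k) * ((n - 1).factorial : ℝ) / (k.factorial : ℝ) *
        ∑ l ∈ Finset.range (n - k + 1), (-1 : ℝ) ^ l / (l.factorial : ℝ) * bernoulliStar l := by
  obtain ⟨m, rfl⟩ : ∃ m, n = m + 1 := ⟨n - 1, by omega⟩
  obtain ⟨j, rfl⟩ : ∃ j, k = j + 1 := ⟨k - 1, by omega⟩
  have hL := factorial_mul_sum_stirling1_mul_stirling2_div (show j ≤ m by omega)
  have hsq : ((-1 : ℝ) ^ (m - j)) ^ 2 = 1 := by rw [← pow_mul, pow_mul', neg_one_sq, one_pow]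
  simp only [Nat.add_sub_add_right, Nat.add_sub_cancel,
    sum_alternating_div_factorial_mul_bernoulliStar]
  apply mul_left_cancel₀ (by positivity : ((j + 1)! : ℝ) ≠ 0)
  rw [hL]
  generalize (-1 : ℝ) ^ (m - j) = s at hsq ⊢
  field_simp
  linear_combination -descPochhammerPrimitive (m - j) 1 * hsq

theorem stmt9 (n k : ℕ) (hn : 0 < n) (hk : 0 < k) (hkn : k ≤ n) :
    ∑ i ∈ Finset.Icc k n, (stirling1 n i : ℝ) * (stirling2 i k : ℝ) / i =
      (-1 : ℝ) ^ (n - k) * ((n - 1).factorial : ℝ) / (k.factorial : ℝ) *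
        ∑ l ∈ Finset.range (n - k + 1), (-1 : ℝ) ^ l / (l.factorial : ℝ) * bernoulliStar l :=
  stmt9_general n k hk hkn
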